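/- If A is an l-regular language over Σ, then its Kleene closure A*, defined by A*(ω) = ⋁{ A(ω₁) ∧ ⋯ ∧ A(ωₙ) : n ≥ 0, ω₁⋯ωₙ = ω } (so in particular A*(ε) ≥ 1, the empty concatenation contributing 1), is an l-regular language. -/

import Mathlib

/-!
Orthomodular lattices are not distributive, so a meet of sups cannot be rewritten as a sup of
meets; the proof only ever takes sups of meets of finitely many values. A prefix of an `l`-VFA run is recorded by its current state and the set of `init`/`δ`
entries met so far, whose meet is its weight; there are finitely many such records, so an `l`-VFA
is a crisp NFA with `l`-valued outputs, and the subset construction makes it deterministic. For a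
deterministic automaton, `A*(w)` is a sup over factorizations of `w` of the meet of the outputs at
the ends of the pieces, and a crisp NFA guesses the factorization while recording the state of the
current piece and the set of states in which the earlier pieces ended. Finally, a crisp NFA with
`l`-valued outputs is an `l`-VFA with `⊤`/`⊥` weights.
-/

/-- A complete orthomodular lattice. -/
class OrthomodularCompleteLattice (α : Type*) extends CompleteLattice α, Compl α where
  inf_compl_self : ∀ a : α, a ⊓ aᶜ = ⊥
  sup_compl_self : ∀ a : α, a ⊔ aᶜ = ⊤
  compl_compl' : ∀ a : α, aᶜᶜ = a
  compl_antitone : ∀ a b : α, a ≤ b → bᶜ ≤ aᶜ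
  orthomodular : ∀ a b : α, a ≤ b → b = a ⊔ (aᶜ ⊓ b)

/-- An `l`-valued finite automaton (`l`-VFA). -/
structure LVFA (Q A l : Type*) where
  δ : Q → A → Q → l
  init : Q → l
  final : Q → l

/-- The `l`-valued language recognized by an `l`-VFA. -/
def lvfaLang {Q A l : Type*} [OrthomodularCompleteLattice l] (M : LVFA Q A l)
    (w : List A) : l :=
  ⨆ path : Fin (w.length + 1) → Q,
    M.init (path 0) ⊓
      (⨅ i : Fin w.length, M.δ (path i.castSucc) (w.get i) (path i.succ)) ⊓
      M.final (path (Fin.last w.length))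

/-- An `l`-valued deterministic finite automaton (`l`-VDFA). -/
structure LVDFA (Q A l : Type*) where
  next : Q → A → Q
  start : Q
  final : Q → l

/-- The `l`-valued language recognized by an `l`-VDFA. -/
def lvdfaLang {Q A l : Type*} (M : LVDFA Q A l) (w : List A) : l :=
  M.final (w.foldl M.next M.start)

/-- An `l`-valued finite automaton with ε-moves (`ε` is encoded as `none`). -/
structure LVFAe (Q A l : Type*) where
  δ : Q → Option A → Q → l
  init : Q → l
  final : Q → l

/-- The `l`-valued language recognized by an `l`-VFA with ε-moves. -/
def lvfaeLang {Q A l : Type*} [OrthomodularCompleteLattice l] (M : LVFAe Q A l)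
    (w : List A) : l :=
  ⨆ n : ℕ, ⨆ τ : Fin n → Option A, ⨆ _ : (List.ofFn τ).reduceOption = w,
    ⨆ path : Fin (n + 1) → Q,
      M.init (path 0) ⊓
        (⨅ i : Fin n, M.δ (path i.castSucc) (τ i) (path i.succ)) ⊓
        M.final (path (Fin.last n))

/-- An `l`-valued language is `l`-regular if it is recognized by some `l`-VFA. -/
def IsLRegular {A l : Type*} [OrthomodularCompleteLattice l] (f : List A → l) : Prop :=
  ∃ (Q : Type) (_ : Fintype Q) (M : LVFA Q A l), ∀ w, lvfaLang M w = f w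

section Sups

variable {β l : Type*} [CompleteLattice l]

theorem iInf_fin_succ {n : ℕ} (g : Fin (n + 1) → l) :
    ⨅ i, g i = g 0 ⊓ ⨅ i : Fin n, g i.succ := by
  rw [← (finSuccEquiv n).symm.iInf_comp, iInf_option]
  rfl

theorem iSup_fin_cons {n : ℕ} (G : (Fin (n + 1) → β) → l) :
    ⨆ p, G p = ⨆ (b) (t : Fin n → β), G (Fin.cons b t) := by
  rw [← (Fin.consEquiv fun _ => β).iSup_comp, iSup_prod]
  rfl

theorem iSup_ofFn (G : List β → l) : ⨆ (n) (v : Fin n → β), G (List.ofFn v) = ⨆ L, G L :=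
  le_antisymm (iSup₂_le fun _ _ => le_iSup G _)
    (iSup_le fun L => le_iSup₂_of_le L.length L.get (by rw [List.ofFn_get]))

theorem iInf_mem_cons (f : β → l) (b : β) (L : List β) :
    ⨅ x ∈ b :: L, f x = f b ⊓ ⨅ x ∈ L, f x := by
  simp [iInf_or, iInf_inf_eq]

theorem iSup_append_eq_cons {X : Type*} (φ : X → List β) (G : List β → X → l) (b : β)
    (w : List β) :
    ⨆ (u : List β) (x : X) (_ : u ++ φ x = b :: w), G u x =
      (⨆ (x : X) (_ : φ x = b :: w), G [] x) ⊔
        ⨆ (u : List β) (x : X) (_ : u ++ φ x = w), G (b :: u) x := by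
  refine le_antisymm (iSup₂_le fun u x => iSup_le fun h => ?_) (sup_le ?_ ?_)
  · rcases List.append_eq_cons_iff.1 h with ⟨rfl, hx⟩ | ⟨u, rfl, hw⟩
    · exact le_sup_of_le_left (le_iSup₂_of_le x hx le_rfl)
    · exact le_sup_of_le_right (le_iSup₂_of_le u x (le_iSup_of_le hw.symm le_rfl))
  · exact iSup₂_le fun x h => le_iSup₂_of_le [] x (le_iSup_of_le h le_rfl)
  · exact iSup₂_le fun u x => iSup_le fun h =>
      le_iSup₂_of_le (b :: u) x (le_iSup_of_le (by simp [h]) le_rfl)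

theorem iSup_flatten_eq_cons (G : List (List β) → l) (b : β) (w : List β) :
    ⨆ (L : List (List β)) (_ : L.flatten = b :: w) (_ : [] ∉ L), G L =
      ⨆ (u : List β) (L : List (List β)) (_ : u ++ L.flatten = w) (_ : [] ∉ L),
        G ((b :: u) :: L) := by
  refine le_antisymm (iSup₂_le fun L hL => iSup_le fun hne => ?_)
    (iSup₂_le fun u L => iSup₂_le fun hL hne => ?_)
  · match L, hL, hne with
    | (c :: u) :: L, hL, hne =>
      obtain ⟨rfl, rfl⟩ : c = b ∧ u ++ L.flatten = w := by simpa using hL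
      exact le_iSup₂_of_le u L
        (le_iSup₂_of_le rfl (fun h => hne (List.mem_cons_of_mem _ h)) le_rfl)
    | [] :: _, _, hne => exact absurd List.mem_cons_self hne
  · exact le_iSup₂_of_le ((b :: u) :: L) (by simp [hL]) (le_iSup_of_le (by simp [hne]) le_rfl)

end Sups

theorem List.eq_nil_of_flatten_eq_nil {β : Type*} {L : List (List β)} (h : L.flatten = [])
    (hne : [] ∉ L) : L = [] :=
  List.eq_nil_iff_forall_not_mem.2 fun u hu => hne (List.flatten_eq_nil_iff.1 h u hu ▸ hu)

namespace LVFA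

variable {Q Q' A l : Type*}

def reindex (M : LVFA Q A l) (e : Q ≃ Q') : LVFA Q' A l where
  δ q a q' := M.δ (e.symm q) a (e.symm q')
  init q := M.init (e.symm q)
  final q := M.final (e.symm q)

section CompleteLattice

variable [CompleteLattice l] (M : LVFA Q A l)

def pathWeight (w : List A) (p : Fin (w.length + 1) → Q) : l :=
  (⨅ i : Fin w.length, M.δ (p i.castSucc) (w.get i) (p i.succ)) ⊓ M.final (p (Fin.last _))

def runSup (x : l) (q : Q) (w : List A) : l :=
  ⨆ t : Fin w.length → Q, x ⊓ M.pathWeight w (Fin.cons q t)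

theorem pathWeight_cons (a : A) (w : List A) (q : Q) (p : Fin (w.length + 1) → Q) :
    M.pathWeight (a :: w) (Fin.cons q p : Fin (w.length + 2) → Q) =
      M.δ q a (p 0) ⊓ M.pathWeight w p := by
  simp only [pathWeight, List.length_cons, iInf_fin_succ, inf_assoc]
  rfl

theorem runSup_nil (x : l) (q : Q) : M.runSup x q [] = x ⊓ M.final q := by
  simp [runSup, pathWeight]

theorem runSup_cons (x : l) (q : Q) (a : A) (w : List A) :
    M.runSup x q (a :: w) = ⨆ q', M.runSup (x ⊓ M.δ q a q') q' w := by
  simp only [runSup, List.length_cons, iSup_fin_cons, pathWeight_cons, Fin.cons_zero, inf_assoc]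

theorem runSup_bot (q : Q) (w : List A) : M.runSup ⊥ q w = ⊥ := by
  simp [runSup]

theorem runSup_ite (P : Prop) [Decidable P] (q : Q) (w : List A) :
    M.runSup (if P then ⊤ else ⊥) q w = ⨆ _ : P, M.runSup ⊤ q w := by
  by_cases h : P <;> simp [h, runSup_bot]

end CompleteLattice

variable [OrthomodularCompleteLattice l] (M : LVFA Q A l)

theorem lvfaLang_eq_iSup_runSup (w : List A) : lvfaLang M w = ⨆ q, M.runSup (M.init q) q w := by
  simp only [lvfaLang, runSup, pathWeight, iSup_fin_cons, Fin.cons_zero, inf_assoc]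

theorem lvfaLang_reindex (e : Q ≃ Q') : lvfaLang (M.reindex e) = lvfaLang M :=
  funext fun _ => ((Equiv.refl _).arrowCongr e.symm).iSup_congr fun _ => rfl

theorem isLRegular_lvfaLang [Finite Q] : IsLRegular (lvfaLang M) :=
  ⟨_, inferInstance, M.reindex (Finite.equivFin Q), fun w => by rw [lvfaLang_reindex]⟩

end LVFA

namespace NFA

variable {α σ l : Type*}

theorem iSup_evalFrom_eq [CompleteLattice l] {N : NFA α σ} {out : σ → l} (F : σ → List α → l)
    (hnil : ∀ z, F z [] = out z) (hcons : ∀ z a w, F z (a :: w) = ⨆ z' ∈ N.step z a, F z' w)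
    (S : Set σ) (w : List α) : ⨆ z ∈ N.evalFrom S w, out z = ⨆ z ∈ S, F z w := by
  induction w generalizing S with
  | nil => simp only [evalFrom_nil, hnil]
  | cons a w ih => simp only [evalFrom_cons, ih, stepSet, iSup_iUnion, hcons]

open Classical in
noncomputable def toLVFA [CompleteLattice l] (N : NFA α σ) (out : σ → l) : LVFA σ α l where
  δ q a q' := if q' ∈ N.step q a then ⊤ else ⊥
  init q := if q ∈ N.start then ⊤ else ⊥
  final := out

theorem lvfaLang_toLVFA [OrthomodularCompleteLattice l] (N : NFA α σ) (out : σ → l)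
    (w : List α) : lvfaLang (N.toLVFA out) w = ⨆ z ∈ N.eval w, out z := by
  have hnil (z : σ) : (N.toLVFA out).runSup ⊤ z [] = out z := by
    rw [LVFA.runSup_nil, top_inf_eq]
    rfl
  have hcons (z : σ) (a : α) (w : List α) : (N.toLVFA out).runSup ⊤ z (a :: w) =
      ⨆ z' ∈ N.step z a, (N.toLVFA out).runSup ⊤ z' w := by
    simp only [LVFA.runSup_cons, top_inf_eq, toLVFA, LVFA.runSup_ite]
  rw [eval, iSup_evalFrom_eq _ hnil hcons, LVFA.lvfaLang_eq_iSup_runSup]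
  simp only [toLVFA, LVFA.runSup_ite]

theorem isLRegular_iSup_eval [OrthomodularCompleteLattice l] [Finite σ] (N : NFA α σ)
    (out : σ → l) : IsLRegular fun w => ⨆ z ∈ N.eval w, out z := by
  simpa only [← lvfaLang_toLVFA] using (N.toLVFA out).isLRegular_lvfaLang

def toLVDFA [CompleteLattice l] (N : NFA α σ) (out : σ → l) : LVDFA (Set σ) α l where
  next := N.stepSet
  start := N.start
  final S := ⨆ z ∈ S, out z

theorem lvdfaLang_toLVDFA [CompleteLattice l] (N : NFA α σ) (out : σ → l) (w : List α) :
    lvdfaLang (N.toLVDFA out) w = ⨆ z ∈ N.eval w, out z :=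
  rfl

end NFA

namespace LVFA

variable {Q A l : Type*}

variable (Q A) in
/-- A state `(q, T)` is a run prefix ending in `q` whose `init`/`δ` entries are named by `T`:
`Sum.inl q₀` for `init q₀` and `Sum.inr (q, a, q')` for `δ q a q'`. -/
def tokenNFA : NFA A (Q × Set (Q ⊕ Q × A × Q)) where
  step z a := Set.range fun q' => (q', insert (Sum.inr (z.1, a, q')) z.2)
  start := Set.range fun q => (q, {Sum.inl q})
  accept := ∅

def tokenValue (M : LVFA Q A l) : Q ⊕ Q × A × Q → l :=
  Sum.elim M.init fun t => M.δ t.1 t.2.1 t.2.2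

def tokenOut [CompleteLattice l] (M : LVFA Q A l) (z : Q × Set (Q ⊕ Q × A × Q)) : l :=
  (⨅ t ∈ z.2, M.tokenValue t) ⊓ M.final z.1

theorem iSup_eval_tokenNFA [OrthomodularCompleteLattice l] (M : LVFA Q A l) (w : List A) :
    ⨆ z ∈ (tokenNFA Q A).eval w, M.tokenOut z = lvfaLang M w := by
  let F (z : Q × Set (Q ⊕ Q × A × Q)) := M.runSup (⨅ t ∈ z.2, M.tokenValue t) z.1
  have hcons (z) (a : A) (w : List A) :
      F z (a :: w) = ⨆ z' ∈ (tokenNFA Q A).step z a, F z' w := by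
    simp only [F, tokenNFA, iSup_range, runSup_cons, iInf_insert, inf_comm]
    rfl
  rw [NFA.eval, NFA.iSup_evalFrom_eq (out := M.tokenOut) F (fun _ => M.runSup_nil ..) hcons,
    lvfaLang_eq_iSup_runSup]
  simp only [F, tokenNFA, iSup_range, iInf_singleton]
  rfl

end LVFA

section Star

variable {A l : Type*} [CompleteLattice l]

def lstar (f : List A → l) (w : List A) : l :=
  ⨆ n : ℕ, ⨆ ws : Fin n → List A, ⨆ _ : (List.ofFn ws).flatten = w, ⨅ i, f (ws i)

theorem lstar_eq_iSup_ne_nil (f : List A → l) (w : List A) :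
    lstar f w = ⨆ (L : List (List A)) (_ : L.flatten = w) (_ : [] ∉ L), ⨅ u ∈ L, f u := by
  have hofFn (n : ℕ) (ws : Fin n → List A) : ⨅ i, f (ws i) = ⨅ u ∈ List.ofFn ws, f u := by
    rw [← iInf_range]
    simp only [Set.mem_range, List.mem_ofFn]
  simp only [lstar, hofFn, iSup_ofFn fun L => ⨆ _ : L.flatten = w, ⨅ u ∈ L, f u]
  refine le_antisymm (iSup₂_le fun L hL => ?_)
    (iSup_mono fun L => iSup_mono fun _ => iSup_const_le)
  -- Empty pieces only add `f []` to the meet, so they can be dropped.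
  refine le_iSup₂_of_le (L.filter fun u => !u.isEmpty)
    (List.flatten_filter_not_isEmpty.trans hL) ?_
  exact le_iSup_of_le (by simp [List.mem_filter])
    (biInf_mono fun u hu => (List.mem_filter.1 hu).1)

end Star

namespace LVDFA

variable {S A l : Type*} [CompleteLattice l] (D : LVDFA S A l)

/-- `some (s, T)`: a nonempty piece is being read and has reached `s`, and the earlier pieces
ended in the states of `T`; `none`: no letter read yet. -/
def starNFA : NFA A (Option (S × Set S)) where
  step
    | none, a => {some (D.next D.start a, ∅)}
    | some (s, T), a => {some (D.next s a, T), some (D.next D.start a, insert s T)}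
  start := {none}
  accept := ∅

def starOut : Option (S × Set S) → l
  | none => ⊤
  | some (s, T) => (⨅ t ∈ T, D.final t) ⊓ D.final s

/-- What `starOut` can still collect from a state on the remaining input: the rest `u` of the
current piece is followed by further nonempty pieces `L`. -/
def starFuture : Option (S × Set S) → List A → l
  | none, w => ⨆ (L : List (List A)) (_ : L.flatten = w) (_ : [] ∉ L), ⨅ v ∈ L, lvdfaLang D v
  | some (s, T), w => ⨆ (u : List A) (L : List (List A)) (_ : u ++ L.flatten = w) (_ : [] ∉ L),
      (⨅ t ∈ T, D.final t) ⊓ D.final (u.foldl D.next s) ⊓ ⨅ v ∈ L, lvdfaLang D v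

theorem starFuture_nil (z : Option (S × Set S)) : D.starFuture z [] = D.starOut z := by
  rcases z with _ | ⟨s, T⟩
  · refine le_antisymm le_top (le_iSup₂_of_le [] rfl (le_iSup_of_le List.not_mem_nil ?_))
    simp
  · refine le_antisymm (iSup₂_le fun u L => iSup₂_le fun h hne => ?_)
      (le_iSup₂_of_le [] [] (le_iSup₂_of_le rfl List.not_mem_nil ?_))
    · obtain ⟨rfl, hL⟩ := List.append_eq_nil_iff.1 h
      simp [starOut, List.eq_nil_of_flatten_eq_nil hL hne]
    · simp [starOut]

theorem starFuture_cons (z : Option (S × Set S)) (a : A) (w : List A) :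
    D.starFuture z (a :: w) = ⨆ z' ∈ D.starNFA.step z a, D.starFuture z' w := by
  rcases z with _ | ⟨s, T⟩
  · simp only [starFuture, starNFA, iSup_flatten_eq_cons, iInf_mem_cons, iSup_singleton,
      Set.mem_empty_iff_false, iInf_false, iInf_top, top_inf_eq, lvdfaLang, List.foldl_cons]
  · simp only [starFuture, starNFA, iSup_append_eq_cons, iSup_flatten_eq_cons, iInf_mem_cons,
      iSup_insert, iSup_singleton, iInf_insert, lvdfaLang, List.foldl_cons, List.foldl_nil]
    rw [sup_comm]
    congr! 6
    ac_rfl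

theorem iSup_eval_starNFA (w : List A) :
    ⨆ z ∈ D.starNFA.eval w, D.starOut z = lstar (lvdfaLang D) w := by
  rw [NFA.eval, NFA.iSup_evalFrom_eq _ D.starFuture_nil D.starFuture_cons, lstar_eq_iSup_ne_nil]
  exact iSup_singleton

end LVDFA

/-- `l`-regular languages are closed under Kleene closure. -/
theorem lregular_star {l A : Type*} [OrthomodularCompleteLattice l] [Fintype A]
    (f : List A → l) (hf : IsLRegular f) :
    IsLRegular (fun w => ⨆ n : ℕ, ⨆ ws : Fin n → List A,
      ⨆ _ : (List.ofFn ws).flatten = w, ⨅ i, f (ws i)) := by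
  obtain ⟨Q, _, M, hM⟩ := hf
  let D := (LVFA.tokenNFA Q A).toLVDFA M.tokenOut
  have hD : lvdfaLang D = f := funext fun w =>
    (NFA.lvdfaLang_toLVDFA _ _ w).trans ((M.iSup_eval_tokenNFA w).trans (hM w))
  change IsLRegular (lstar f)
  simpa only [← hD, D.iSup_eval_starNFA] using D.starNFA.isLRegular_iSup_eval D.starOut
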